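/- arXiv:2505.23196 — 5 statements merged into one kernel-verified Lean document; each statement's English description precedes it below -/
import Mathlib

section
/- Let p be a probability density on ℝ^d with respect to a probability measure μ having density p. Suppose f = g ∘ p for a strictly increasing g. If τ and τ* are thresholds such that μ({y : f(y) ≥ τ}) = 1 - ε = μ({y : p(y) ≥ τ*}), and the level sets {y : p(y) = t} have μ-measure zero for all t, then {y : f(y) ≥ τ} = {y : p(y) ≥ τ*} up to a μ-null set, and in particular the Lebesgue measures of the two regions are equal. -/
open MeasureTheory Set
open scoped ENNReal NNReal symmDiff

private lemma isUpperSet_measurableSet {S : Set ℝ≥0∞} (h : IsUpperSet S) :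
    MeasurableSet S := by
  rcases S.eq_empty_or_nonempty with rfl | hne
  · exact MeasurableSet.empty
  · have hsub : S ⊆ Set.Ici (sInf S) := fun t ht => csInf_le (OrderBot.bddBelow S) ht
    have hsub2 : Set.Ioi (sInf S) ⊆ S := fun t ht => by
      obtain ⟨s, hs, hst⟩ := exists_lt_of_csInf_lt hne ht
      exact h hst.le hs
    have : S = Set.Ioi (sInf S) ∪ (S ∩ {sInf S}) := by
      apply Set.Subset.antisymm
      · intro t ht
        rcases lt_or_eq_of_le (Set.mem_Ici.mp (hsub ht)) with h' | h'
        · exact Or.inl h'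
        · exact Or.inr ⟨ht, h'.symm⟩
      · rintro t (ht | ⟨ht, _⟩)
        · exact hsub2 ht
        · exact ht
    rw [this]
    exact measurableSet_Ioi.union ((Set.subsingleton_singleton.anti Set.inter_subset_right).measurableSet)

/-- If `E ⊆ {p ≠ 0}` is measurable and has `withDensity`-measure zero, then it has
volume zero. -/
private lemma volume_eq_zero_of_withDensity {d : ℕ} {p : (Fin d → ℝ) → ℝ≥0∞}
    (hp : Measurable p) {E : Set (Fin d → ℝ)} (hE : MeasurableSet E)
    (hpos : ∀ y ∈ E, p y ≠ 0) (h0 : volume.withDensity p E = 0) :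
    volume E = 0 := by
  rw [withDensity_apply p hE] at h0
  have hae : ∀ᵐ y ∂(volume : Measure (Fin d → ℝ)), y ∈ E → p y = 0 :=
    (setLIntegral_eq_zero_iff hE hp).mp h0
  have h0' : volume {y | ¬(y ∈ E → p y = 0)} = 0 := by
    simpa [ae_iff] using hae
  refine measure_mono_null ?_ h0'
  intro y hy
  exact fun h => hpos y hy (h hy)

/-- If `f = g ∘ p` for strictly increasing `g`, and the superlevel sets
`{f ≥ τ}` and `{p ≥ τ*}` both have `μ`-measure `1 - ε` where `μ` is the measure with
density `p`, and all exact level sets of `p` are `μ`-null, then the two regions agree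
up to a `μ`-null set and have equal Lebesgue measure. -/
theorem region_eq_ae_of_strictMono
    (d : ℕ) (p : (Fin d → ℝ) → ℝ≥0∞) (hp : Measurable p)
    (μ : Measure (Fin d → ℝ)) (hμ : μ = volume.withDensity p)
    (hprob : IsProbabilityMeasure μ)
    (g : ℝ≥0∞ → ℝ≥0∞) (hg : StrictMono g)
    (f : (Fin d → ℝ) → ℝ≥0∞) (hf : f = g ∘ p)
    (ε : ℝ) (hε : ε ∈ Set.Ioo (0:ℝ) 1)
    (τ τs : ℝ≥0∞)
    (h1 : μ {y | τ ≤ f y} = ENNReal.ofReal (1 - ε))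
    (h2 : μ {y | τs ≤ p y} = ENNReal.ofReal (1 - ε))
    (hlevel : ∀ t : ℝ≥0∞, μ {y | p y = t} = 0) :
    μ (({y | τ ≤ f y} ∆ {y | τs ≤ p y})) = 0 ∧
      volume {y | τ ≤ f y} = volume {y | τs ≤ p y} := by
  set S₁ : Set ℝ≥0∞ := {t | τ ≤ g t} with hS₁
  set S₂ : Set ℝ≥0∞ := Set.Ici τs with hS₂
  have hU₁ : IsUpperSet S₁ := fun a b hab ha => le_trans ha (hg.monotone hab)
  have hU₂ : IsUpperSet S₂ := isUpperSet_Ici τs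
  have hAeq : {y | τ ≤ f y} = p ⁻¹' S₁ := by
    ext y; simp [hf, hS₁]
  have hBeq : {y | τs ≤ p y} = p ⁻¹' S₂ := rfl
  set A := p ⁻¹' S₁ with hA
  set B := p ⁻¹' S₂ with hB
  rw [hBeq] at h2
  rw [hAeq] at h1
  rw [hAeq, hBeq]
  have hmA : MeasurableSet A := hp (isUpperSet_measurableSet hU₁)
  have hmB : MeasurableSet B := hp (isUpperSet_measurableSet hU₂)
  -- the measures agree and are finite
  have hlt1 : ENNReal.ofReal (1 - ε) < 1 := by
    rw [show (1 : ℝ≥0∞) = ENNReal.ofReal 1 by simp]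
    exact (ENNReal.ofReal_lt_ofReal_iff one_pos).mpr (by linarith [hε.1])
  -- A ≠ univ and B ≠ univ, hence 0 ∉ S₁, 0 ∉ S₂
  have h0S₁ : (0 : ℝ≥0∞) ∉ S₁ := by
    intro h0
    have : A = Set.univ := by
      apply Set.eq_univ_of_forall
      intro y
      exact hU₁ zero_le h0
    rw [this, measure_univ] at h1
    exact absurd h1.symm hlt1.ne
  have h0S₂ : (0 : ℝ≥0∞) ∉ S₂ := by
    intro h0
    have : B = Set.univ := Set.eq_univ_of_forall fun y => hU₂ zero_le h0
    rw [this, measure_univ] at h2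
    exact absurd h2.symm hlt1.ne
  have hApos : ∀ y ∈ A, p y ≠ 0 := fun y hy h0 => h0S₁ (h0 ▸ hy)
  have hBpos : ∀ y ∈ B, p y ≠ 0 := fun y hy h0 => h0S₂ (h0 ▸ hy)
  -- symmetric difference is μ-null
  have key : μ (A ∆ B) = 0 := by
    rcases hU₁.total hU₂ with hsub | hsub
    · have hAB : A ⊆ B := Set.preimage_mono hsub
      have : μ (B \ A) = 0 := by
        rw [measure_diff hAB hmA.nullMeasurableSet (measure_ne_top μ A), h1, h2,
          tsub_self]
      have hAB0 : A \ B = ∅ := Set.diff_eq_empty.mpr hAB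
      rw [Set.symmDiff_def, measure_union_null (by rw [hAB0]; simp) this]
    · have hBA : B ⊆ A := Set.preimage_mono hsub
      have : μ (A \ B) = 0 := by
        rw [measure_diff hBA hmB.nullMeasurableSet (measure_ne_top μ B), h1, h2,
          tsub_self]
      have hBA0 : B \ A = ∅ := Set.diff_eq_empty.mpr hBA
      rw [Set.symmDiff_def, measure_union_null this (by rw [hBA0]; simp)]
  refine ⟨key, ?_⟩
  -- symmetric difference is volume-null
  have hmS : MeasurableSet (A ∆ B) := hmA.symmDiff hmB
  have hSpos : ∀ y ∈ A ∆ B, p y ≠ 0 := by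
    rintro y (⟨hy, -⟩ | ⟨hy, -⟩)
    · exact hApos y hy
    · exact hBpos y hy
  have hv : volume (A ∆ B) = 0 :=
    volume_eq_zero_of_withDensity hp hmS hSpos (by rw [← hμ]; exact key)
  have hd1 : A \ B ⊆ A ∆ B := fun x hx => Set.mem_symmDiff.mpr (Or.inl ⟨hx.1, hx.2⟩)
  have hd2 : B \ A ⊆ A ∆ B := fun x hx => Set.mem_symmDiff.mpr (Or.inr ⟨hx.1, hx.2⟩)
  exact measure_congr (MeasureTheory.ae_eq_set.mpr
    ⟨measure_mono_null hd1 hv, measure_mono_null hd2 hv⟩)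
end

section
/- Let α₁,...,α_m, α_{m+1} be exchangeable, almost surely distinct real random variables. Let τ be the k-th smallest of α₁,...,α_m where k = ⌈ε(m+1)⌉ - 1 ≥ 1 (equivalently τ is the empirical lower ε-quantile with conformal correction). Then P(α_{m+1} ≥ τ) ≥ 1 - ε. -/
open MeasureTheory Set
open scoped ENNReal

namespace ConformalAux

noncomputable def cnt (m : ℕ) (v : Fin (m + 1) → ℝ) (j : Fin (m + 1)) : ℕ :=
  (Finset.univ.filter (fun i => v i ≤ v j)).card

lemma cnt_meas {m : ℕ} (j : Fin (m + 1)) :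
    Measurable (fun v : Fin (m + 1) → ℝ => cnt m v j) := by
  have h : (fun v : Fin (m + 1) → ℝ => cnt m v j)
      = fun v => ∑ i : Fin (m + 1), if v i ≤ v j then 1 else 0 := by
    funext v; rw [cnt, Finset.card_filter]
  rw [h]
  exact Finset.measurable_sum _ fun i _ =>
    Measurable.ite (measurableSet_le (measurable_pi_apply i) (measurable_pi_apply j))
      measurable_const measurable_const

lemma cnt_pos {m : ℕ} (v : Fin (m + 1) → ℝ) (j : Fin (m + 1)) : 1 ≤ cnt m v j := by
  have hj : j ∈ Finset.univ.filter (fun i => v i ≤ v j) := by simp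
  have h := Finset.card_pos.mpr ⟨j, hj⟩
  unfold cnt; omega

lemma cnt_mono_aux {m : ℕ} {v : Fin (m + 1) → ℝ} {j j' : Fin (m + 1)} (h : v j ≤ v j')
    (he : cnt m v j' ≤ cnt m v j) : v j' ≤ v j := by
  have hsub : Finset.univ.filter (fun i => v i ≤ v j)
      ⊆ Finset.univ.filter (fun i => v i ≤ v j') := by
    intro i hi
    simp only [Finset.mem_filter, Finset.mem_univ, true_and] at hi ⊢
    exact le_trans hi h
  have heq := Finset.eq_of_subset_of_card_le hsub he
  have hj' : j' ∈ Finset.univ.filter (fun i => v i ≤ v j') := by simp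
  rw [← heq] at hj'
  simpa using hj'

lemma cnt_inj {m : ℕ} {v : Fin (m + 1) → ℝ} (hv : Function.Injective v) :
    Function.Injective (cnt m v) := by
  intro j j' h
  rcases le_total (v j) (v j') with hle | hle
  · exact hv (le_antisymm hle (cnt_mono_aux hle h.ge))
  · exact (hv (le_antisymm hle (cnt_mono_aux hle h.le))).symm

lemma cnt_perm {m : ℕ} (σ : Equiv.Perm (Fin (m + 1))) (v : Fin (m + 1) → ℝ)
    (j : Fin (m + 1)) : cnt m (fun i => v (σ i)) j = cnt m v (σ j) := by
  unfold cnt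
  refine Finset.card_bij (fun i _ => σ i) ?_ ?_ ?_
  · intro a ha; simp only [Finset.mem_filter, Finset.mem_univ, true_and] at ha ⊢; exact ha
  · intro a _ b _ hab; exact σ.injective hab
  · intro b hb
    simp only [Finset.mem_filter, Finset.mem_univ, true_and] at hb
    exact ⟨σ.symm b, by simp [hb], by simp⟩

lemma bridge {m k : ℕ} (v : Fin (m + 1) → ℝ) (t : ℝ)
    (h1 : (Finset.univ.filter (fun i : Fin m => v i.castSucc ≤ t)).card = k)
    (h2 : ∃ i : Fin m, v i.castSucc = t)
    (h3 : k + 1 ≤ cnt m v (Fin.last m)) :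
    t ≤ v (Fin.last m) := by
  by_contra hlt
  push_neg at hlt
  obtain ⟨i0, hi0⟩ := h2
  set S := Finset.univ.filter (fun i : Fin m => v i.castSucc ≤ v (Fin.last m)) with hS
  have hcard : k ≤ S.card := by
    have hsub : Finset.univ.filter (fun i : Fin (m + 1) => v i ≤ v (Fin.last m)) ⊆
        insert (Fin.last m) (S.image Fin.castSucc) := by
      intro i hi
      simp only [Finset.mem_filter, Finset.mem_univ, true_and] at hi
      rcases Fin.eq_castSucc_or_eq_last i with ⟨i', rfl⟩ | rfl
      · exact Finset.mem_insert_of_mem (Finset.mem_image_of_mem _ (by simp [hS, hi]))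
      · exact Finset.mem_insert_self _ _
    have hc := Finset.card_le_card hsub
    have h4 := Finset.card_insert_le (Fin.last m) (S.image Fin.castSucc)
    have h5 := Finset.card_image_le (f := Fin.castSucc) (s := S)
    unfold cnt at h3
    omega
  have hi0not : i0 ∉ S := by
    simp only [hS, Finset.mem_filter, Finset.mem_univ, true_and]
    rw [hi0]; exact not_le.mpr hlt
  have hsub2 : insert i0 S ⊆ Finset.univ.filter (fun i : Fin m => v i.castSucc ≤ t) := by
    intro i hi
    rcases Finset.mem_insert.mp hi with rfl | hi
    · simp [hi0.le, hi0]
    · simp only [hS, Finset.mem_filter, Finset.mem_univ, true_and] at hi ⊢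
      exact hi.trans hlt.le
  have hc2 := Finset.card_le_card hsub2
  rw [h1, Finset.card_insert_of_notMem hi0not] at hc2
  omega

end ConformalAux

open ConformalAux

/-- Coverage of JAPAN's thresholding rule.  For exchangeable, a.s. distinct
scores `α₁, …, α_m, α_{m+1}`, if `τ` is the `k`-th smallest of the first `m` scores where
`k = ⌈ε(m+1)⌉ - 1 ≥ 1`, then `P(α_{m+1} ≥ τ) ≥ 1 - ε`. -/
theorem conformal_threshold_coverage
    {Ω : Type*} [MeasurableSpace Ω] (ℙ : Measure Ω) [IsProbabilityMeasure ℙ]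
    (m : ℕ) (α : Fin (m + 1) → Ω → ℝ) (hmeas : ∀ i, Measurable (α i))
    (hexch : ∀ σ : Equiv.Perm (Fin (m + 1)),
      Measure.map (fun ω => fun i => α (σ i) ω) ℙ = Measure.map (fun ω => fun i => α i ω) ℙ)
    (hdist : ∀ᵐ ω ∂ℙ, Function.Injective (fun i => α i ω))
    (ε : ℝ) (hε : ε ∈ Set.Ioo (0:ℝ) 1)
    (k : ℕ) (hk : k = ⌈ε * (m + 1)⌉₊ - 1) (hk1 : 1 ≤ k)
    (τ : Ω → ℝ)
    -- `τ ω` is the `k`-th smallest calibration score: exactly `k` calibration scores are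
    -- `≤ τ ω`, and `τ ω` is itself one of the calibration scores.
    (hτ : ∀ᵐ ω ∂ℙ,
      ((Finset.univ.filter (fun i : Fin m => α i.castSucc ω ≤ τ ω)).card = k) ∧
      (∃ i : Fin m, α i.castSucc ω = τ ω)) :
    ENNReal.ofReal (1 - ε) ≤ ℙ {ω | τ ω ≤ α (Fin.last m) ω} := by
  classical
  set A : Ω → Fin (m + 1) → ℝ := fun ω i => α i ω with hA
  have hAmeas : Measurable A := measurable_pi_lambda _ hmeas
  -- Step 1: exchangeability of ranks
  have key : ∀ (j : Fin (m + 1)) (r : ℕ),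
      ℙ {ω | cnt m (A ω) j = r} = ℙ {ω | cnt m (A ω) (Fin.last m) = r} := by
    intro j r
    set σ : Equiv.Perm (Fin (m + 1)) := Equiv.swap j (Fin.last m) with hσ
    have hσmeas : Measurable (fun ω => fun i => α (σ i) ω) :=
      measurable_pi_lambda _ fun i => hmeas _
    have hs : MeasurableSet ((fun v => cnt m v j) ⁻¹' {r}) :=
      cnt_meas j (measurableSet_singleton r)
    have h2 : ℙ ((fun ω => fun i => α (σ i) ω) ⁻¹' ((fun v => cnt m v j) ⁻¹' {r}))
        = ℙ (A ⁻¹' ((fun v => cnt m v j) ⁻¹' {r})) := by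
      rw [← Measure.map_apply hσmeas hs, ← Measure.map_apply hAmeas hs, hexch σ]
    have hset : (fun ω => fun i => α (σ i) ω) ⁻¹' ((fun v => cnt m v j) ⁻¹' {r})
        = {ω | cnt m (A ω) (Fin.last m) = r} := by
      ext ω
      simp only [mem_preimage, mem_singleton_iff, mem_setOf_eq]
      have hh : (fun i => α (σ i) ω) = (fun i => A ω (σ i)) := rfl
      rw [hh, cnt_perm]
      rw [hσ, Equiv.swap_apply_left]
    have hset2 : A ⁻¹' ((fun v => cnt m v j) ⁻¹' {r}) = {ω | cnt m (A ω) j = r} := rfl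
    rw [hset, hset2] at h2
    exact h2.symm
  obtain ⟨T, hTsub, hTmeas, hT0⟩ :=
    exists_measurable_superset_of_null (ae_iff.mp hdist)
  have hmeasE : ∀ (j : Fin (m + 1)) (r : ℕ),
      MeasurableSet {ω | cnt m (A ω) j = r} := fun j r =>
    (cnt_meas j).comp hAmeas (measurableSet_singleton r)
  -- Step 2: each rank value has probability ≤ 1/(m+1)
  have hple : ∀ r : ℕ,
      ℙ {ω | cnt m (A ω) (Fin.last m) = r} ≤ 1 / ((m : ℝ≥0∞) + 1) := by
    intro r
    set E : Fin (m + 1) → Set Ω := fun j => {ω | cnt m (A ω) j = r} \ T with hE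
    have hEmeas : ∀ j, MeasurableSet (E j) := fun j => (hmeasE j r).diff hTmeas
    have hdisj : Pairwise (Function.onFun Disjoint E) := by
      intro j j' hjj'
      rw [Function.onFun, Set.disjoint_left]
      rintro ω ⟨hω1, hωT⟩ ⟨hω2, _⟩
      have hinj : Function.Injective (fun i => α i ω) := by
        by_contra hcon
        exact hωT (hTsub (by simpa using hcon))
      exact hjj' (cnt_inj hinj (hω1.trans hω2.symm))
    have hsum : ∑ j : Fin (m + 1), ℙ (E j) ≤ 1 := by
      have hu := measure_iUnion hdisj hEmeas (μ := ℙ)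
      rw [tsum_fintype] at hu
      rw [← hu]
      simpa using measure_mono (subset_univ (⋃ j, E j)) (μ := ℙ)
    have hEeq : ∀ j, ℙ (E j) = ℙ {ω | cnt m (A ω) j = r} := fun j =>
      measure_diff_null hT0
    have hsum2 : ((m : ℝ≥0∞) + 1) * ℙ {ω | cnt m (A ω) (Fin.last m) = r} ≤ 1 := by
      calc ((m : ℝ≥0∞) + 1) * ℙ {ω | cnt m (A ω) (Fin.last m) = r}
          = ∑ _j : Fin (m + 1), ℙ {ω | cnt m (A ω) (Fin.last m) = r} := by
            rw [Finset.sum_const, Finset.card_univ, Fintype.card_fin, nsmul_eq_mul]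
            push_cast; ring
        _ = ∑ j : Fin (m + 1), ℙ (E j) := by
            refine Finset.sum_congr rfl fun j _ => ?_
            rw [hEeq j, key j r]
        _ ≤ 1 := hsum
    rw [ENNReal.le_div_iff_mul_le (Or.inl (by simp)) (Or.inl (by simp))]
    rw [mul_comm]
    exact hsum2
  -- Step 3: the rank is ≤ k with probability ≤ ε
  have hkr : (k : ℝ) ≤ ε * (m + 1) := by
    have hc2 : 1 ≤ ⌈ε * ((m : ℝ) + 1)⌉₊ := by
      by_contra hcon
      push_neg at hcon
      interval_cases h : ⌈ε * ((m : ℝ) + 1)⌉₊ <;> omega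
    have hlt : ((⌈ε * ((m : ℝ) + 1)⌉₊ : ℝ)) < ε * ((m : ℝ) + 1) + 1 :=
      Nat.ceil_lt_add_one (mul_nonneg hε.1.le (by positivity))
    have hkc : (k : ℝ) = (⌈ε * ((m : ℝ) + 1)⌉₊ : ℝ) - 1 := by
      rw [hk, Nat.cast_sub hc2]; norm_num
    push_cast
    linarith
  have hlow : ℙ {ω | cnt m (A ω) (Fin.last m) ≤ k} ≤ ENNReal.ofReal ε := by
    have hsub : {ω | cnt m (A ω) (Fin.last m) ≤ k} ⊆
        ⋃ r ∈ Finset.Icc 1 k, {ω | cnt m (A ω) (Fin.last m) = r} := by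
      intro ω hω
      exact Set.mem_biUnion (Finset.mem_Icc.mpr ⟨cnt_pos _ _, hω⟩) rfl
    calc ℙ {ω | cnt m (A ω) (Fin.last m) ≤ k}
        ≤ ∑ r ∈ Finset.Icc 1 k, ℙ {ω | cnt m (A ω) (Fin.last m) = r} :=
          (measure_mono hsub).trans (measure_biUnion_finset_le _ _)
      _ ≤ ∑ _r ∈ Finset.Icc 1 k, 1 / ((m : ℝ≥0∞) + 1) :=
          Finset.sum_le_sum fun r _ => hple r
      _ = (k : ℝ≥0∞) * (1 / ((m : ℝ≥0∞) + 1)) := by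
          rw [Finset.sum_const, Nat.card_Icc, nsmul_eq_mul]
          norm_num
      _ = (k : ℝ≥0∞) / ((m : ℝ≥0∞) + 1) := by rw [mul_one_div]
      _ = ENNReal.ofReal ((k : ℝ) / ((m : ℝ) + 1)) := by
          rw [ENNReal.ofReal_div_of_pos (by positivity)]
          norm_num [ENNReal.ofReal_natCast, ENNReal.ofReal_add]
      _ ≤ ENNReal.ofReal ε := by
          apply ENNReal.ofReal_le_ofReal
          rw [div_le_iff₀ (by positivity)]
          linarith
  -- Step 4: complement bound
  have hup : 1 - ENNReal.ofReal ε ≤ ℙ {ω | k + 1 ≤ cnt m (A ω) (Fin.last m)} := by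
    have hmeasle : MeasurableSet {ω | cnt m (A ω) (Fin.last m) ≤ k} :=
      ((cnt_meas (Fin.last m)).comp hAmeas) measurableSet_Iic
    have hcompl : {ω | k + 1 ≤ cnt m (A ω) (Fin.last m)}
        = {ω | cnt m (A ω) (Fin.last m) ≤ k}ᶜ := by
      ext ω; simp only [Set.mem_setOf_eq, Set.mem_compl_iff, not_le]; omega
    rw [hcompl, measure_compl hmeasle (measure_ne_top ℙ _), measure_univ]
    exact tsub_le_tsub_left hlow 1
  -- Step 5: bridge to the threshold event
  obtain ⟨T', hT'sub, hT'meas, hT'0⟩ :=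
    exists_measurable_superset_of_null (ae_iff.mp hτ)
  have hsub2 : {ω | k + 1 ≤ cnt m (A ω) (Fin.last m)} \ T'
      ⊆ {ω | τ ω ≤ α (Fin.last m) ω} := by
    rintro ω ⟨hω, hωT⟩
    have hprop : ((Finset.univ.filter (fun i : Fin m => α i.castSucc ω ≤ τ ω)).card = k) ∧
        (∃ i : Fin m, α i.castSucc ω = τ ω) := by
      by_contra hcon
      exact hωT (hT'sub (by simpa using hcon))
    exact bridge (A ω) (τ ω) hprop.1 hprop.2 hω
  have hofr : ENNReal.ofReal (1 - ε) ≤ 1 - ENNReal.ofReal ε := by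
    have hadd : ENNReal.ofReal (1 - ε) + ENNReal.ofReal ε = 1 := by
      rw [← ENNReal.ofReal_add (by linarith [hε.2]) (le_of_lt hε.1)]
      norm_num
    exact (ENNReal.eq_sub_of_add_eq ENNReal.ofReal_ne_top hadd).le
  calc ENNReal.ofReal (1 - ε) ≤ 1 - ENNReal.ofReal ε := hofr
    _ ≤ ℙ {ω | k + 1 ≤ cnt m (A ω) (Fin.last m)} := hup
    _ = ℙ ({ω | k + 1 ≤ cnt m (A ω) (Fin.last m)} \ T') := (measure_diff_null hT'0).symm
    _ ≤ ℙ {ω | τ ω ≤ α (Fin.last m) ω} := measure_mono hsub2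
end

section
/- Let X₁,...,X_{n+1} be exchangeable real-valued random variables that are almost surely distinct. Then the rank of X_{n+1} among X₁,...,X_{n+1} is uniformly distributed on {1, 2, ..., n+1}. -/
open MeasureTheory Set
open scoped ENNReal Classical

noncomputable def rkAux {n : ℕ} (v : Fin (n+1) → ℝ) (j : Fin (n+1)) : ℕ :=
  (Finset.univ.filter (fun i => v i < v j)).card

lemma rkAux_le {n : ℕ} (v : Fin (n+1) → ℝ) (j : Fin (n+1)) : rkAux v j ≤ n := by
  have h : (Finset.univ.filter (fun i => v i < v j)) ⊆ Finset.univ.erase j := by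
    intro i hi
    simp only [Finset.mem_filter] at hi
    refine Finset.mem_erase.mpr ⟨?_, Finset.mem_univ _⟩
    rintro rfl; exact lt_irrefl _ hi.2
  calc rkAux v j ≤ (Finset.univ.erase j).card := Finset.card_le_card h
    _ = n := by simp

lemma rkAux_lt {n : ℕ} (v : Fin (n+1) → ℝ) {j j' : Fin (n+1)} (hlt : v j < v j') :
    rkAux v j < rkAux v j' := by
  have hss : Finset.univ.filter (fun i => v i < v j)
      ⊂ Finset.univ.filter (fun i => v i < v j') := by
    refine (Finset.ssubset_iff_of_subset ?_).2 ⟨j, ?_, ?_⟩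
    · intro i hi
      simp only [Finset.mem_filter] at hi ⊢
      exact ⟨hi.1, hi.2.trans hlt⟩
    · simp [hlt]
    · simp
  exact Finset.card_lt_card hss

lemma rkAux_inj {n : ℕ} {v : Fin (n+1) → ℝ} (hv : Function.Injective v) :
    Function.Injective (rkAux v) := by
  intro j j' h
  rcases lt_trichotomy (v j) (v j') with hlt | heq | hlt
  · exact absurd h (rkAux_lt v hlt).ne
  · exact hv heq
  · exact absurd h.symm (rkAux_lt v hlt).ne

lemma rkAux_surj {n : ℕ} {v : Fin (n+1) → ℝ} (hv : Function.Injective v)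
    {m : ℕ} (hm : m ≤ n) : ∃ j, rkAux v j = m := by
  have hinj : Function.Injective
      (fun j => (⟨rkAux v j, Nat.lt_succ_of_le (rkAux_le v j)⟩ : Fin (n+1))) := by
    intro a b h
    exact rkAux_inj hv (by simpa [Fin.mk.injEq] using h)
  obtain ⟨j, hj⟩ := (Finite.injective_iff_surjective.1 hinj) ⟨m, Nat.lt_succ_of_le hm⟩
  exact ⟨j, by simpa using congrArg Fin.val hj⟩

lemma rkAux_comp {n : ℕ} (v : Fin (n+1) → ℝ) (σ : Equiv.Perm (Fin (n+1))) (j : Fin (n+1)) :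
    rkAux (v ∘ σ) j = rkAux v (σ j) := by
  unfold rkAux
  exact Finset.card_equiv σ (by simp)

lemma measurable_rkAux {n : ℕ} (j : Fin (n+1)) :
    Measurable (fun v : Fin (n+1) → ℝ => rkAux v j) := by
  have h : (fun v : Fin (n+1) → ℝ => rkAux v j)
      = fun v => ∑ i, if v i < v j then 1 else 0 := by
    funext v; rw [rkAux, Finset.card_filter]
  rw [h]
  exact Finset.measurable_sum _ fun i _ =>
    Measurable.ite (measurableSet_lt (measurable_pi_apply i) (measurable_pi_apply j))
      measurable_const measurable_const

lemma card_castSucc {n : ℕ} (v : Fin (n+1) → ℝ) :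
    (Finset.univ.filter (fun i : Fin n => v i.castSucc < v (Fin.last n))).card
      = rkAux v (Fin.last n) := by
  unfold rkAux
  have hne : ∀ a : Fin (n+1), a ∈ Finset.univ.filter (fun i => v i < v (Fin.last n)) →
      a ≠ Fin.last n := by
    intro a ha
    simp only [Finset.mem_filter] at ha
    rintro rfl; exact lt_irrefl _ ha.2
  refine Finset.card_bij' (fun i _ => Fin.castSucc i) (fun a ha => a.castPred (hne a ha))
    ?_ ?_ ?_ ?_
  · intro a ha
    simp only [Finset.mem_filter] at ha ⊢
    exact ⟨Finset.mem_univ _, ha.2⟩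
  · intro a ha
    simp only [Finset.mem_filter] at ha ⊢
    refine ⟨Finset.mem_univ _, ?_⟩
    rw [Fin.castSucc_castPred]
    exact ha.2
  · intro a ha; simp
  · intro a ha; simp

/-- For exchangeable, a.s. distinct real random variables
`X₁, …, X_{n+1}`, the rank of `X_{n+1}` among all `n+1` variables is uniformly
distributed on `{1, …, n+1}`. -/
theorem rank_uniform_of_exchangeable
    {Ω : Type*} [MeasurableSpace Ω] (ℙ : Measure Ω) [IsProbabilityMeasure ℙ]
    (n : ℕ) (X : Fin (n + 1) → Ω → ℝ) (hmeas : ∀ i, Measurable (X i))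
    (hexch : ∀ σ : Equiv.Perm (Fin (n + 1)),
      Measure.map (fun ω => fun i => X (σ i) ω) ℙ = Measure.map (fun ω => fun i => X i ω) ℙ)
    (hdist : ∀ᵐ ω ∂ℙ, Function.Injective (fun i => X i ω))
    (rank : Ω → ℕ)
    (hrank : ∀ ω, rank ω =
      1 + (Finset.univ.filter
        (fun i : Fin n => X i.castSucc ω < X (Fin.last n) ω)).card) :
    ∀ k ∈ Finset.Icc 1 (n + 1), ℙ {ω | rank ω = k} = (↑(n + 1) : ℝ≥0∞)⁻¹ := by
  classical
  intro k hk
  obtain ⟨hk1, hk2⟩ := Finset.mem_Icc.1 hk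
  set f : Ω → (Fin (n+1) → ℝ) := fun ω i => X i ω with hfdef
  have hfm : Measurable f := measurable_pi_lambda _ hmeas
  set μ := Measure.map f ℙ with hμdef
  haveI : IsProbabilityMeasure μ := Measure.isProbabilityMeasure_map hfm.aemeasurable
  set A : Fin (n+1) → Set (Fin (n+1) → ℝ) := fun j => {v | 1 + rkAux v j = k} with hAdef
  have hAm : ∀ j, MeasurableSet (A j) := by
    intro j
    have h : A j = (fun v => 1 + rkAux v j) ⁻¹' {k} := by
      ext v; simp [hAdef]
    rw [h]
    exact (measurable_const.add (measurable_rkAux j)) (measurableSet_singleton k)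
  have hcm : ∀ σ : Equiv.Perm (Fin (n+1)), Measurable (fun v : Fin (n+1) → ℝ => v ∘ σ) :=
    fun σ => measurable_pi_lambda _ fun i => measurable_pi_apply _
  have hμinv : ∀ σ : Equiv.Perm (Fin (n+1)), Measure.map (fun v => v ∘ σ) μ = μ := by
    intro σ
    rw [hμdef, Measure.map_map (hcm σ) hfm]
    exact hexch σ
  have hAeq : ∀ j, μ (A j) = μ (A (Fin.last n)) := by
    intro j
    have hpre : A j = (fun v => v ∘ Equiv.swap j (Fin.last n)) ⁻¹' (A (Fin.last n)) := by
      ext v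
      simp only [hAdef, mem_preimage, mem_setOf_eq]
      rw [rkAux_comp, Equiv.swap_apply_right]
    rw [hpre, ← Measure.map_apply (hcm _) (hAm _), hμinv]
  set I : Set (Fin (n+1) → ℝ) := {v | Function.Injective v} with hIdef
  have hIm : MeasurableSet I := by
    have h : I = ⋂ (i) (j), {v : Fin (n+1) → ℝ | v i = v j → i = j} := by
      ext v
      simp only [hIdef, mem_setOf_eq, mem_iInter, Function.Injective]
    rw [h]
    refine MeasurableSet.iInter fun i => MeasurableSet.iInter fun j => ?_
    by_cases hij : i = j
    · subst hij
      have : {v : Fin (n+1) → ℝ | v i = v i → i = i} = univ := by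
        ext v; simp
      rw [this]; exact MeasurableSet.univ
    · have : {v : Fin (n+1) → ℝ | v i = v j → i = j} = {v | v i = v j}ᶜ := by
        ext v; simp [hij]
      rw [this]
      exact (measurableSet_eq_fun (measurable_pi_apply i) (measurable_pi_apply j)).compl
  have hIc : μ Iᶜ = 0 := by
    rw [hμdef, Measure.map_apply hfm hIm.compl]
    exact ae_iff.mp hdist
  have hI1 : μ I = 1 := (prob_compl_eq_zero_iff hIm).mp hIc
  have hdisj : Pairwise (Function.onFun Disjoint (fun j => I ∩ A j)) := by
    intro j j' hne
    refine Set.disjoint_left.2 ?_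
    rintro v ⟨hvI, hvA⟩ ⟨_, hvA'⟩
    simp only [hAdef, mem_setOf_eq] at hvA hvA'
    exact hne (rkAux_inj hvI (by omega))
  have hcover : (⋃ j, I ∩ A j) = I := by
    ext v
    simp only [mem_iUnion, mem_inter_iff]
    constructor
    · rintro ⟨j, hvI, _⟩; exact hvI
    · intro hvI
      obtain ⟨j, hj⟩ := rkAux_surj hvI (show k - 1 ≤ n by omega)
      exact ⟨j, hvI, by simp only [hAdef, mem_setOf_eq, hj]; omega⟩
  have hsum : ∑ j : Fin (n+1), μ (I ∩ A j) = 1 := by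
    rw [← tsum_fintype (L := SummationFilter.unconditional _), ← measure_iUnion hdisj (fun j => hIm.inter (hAm j)), hcover, hI1]
  have hIA : ∀ j, μ (I ∩ A j) = μ (A j) := by
    intro j
    rw [Set.inter_comm]
    exact measure_inter_conull (by simpa using hIc)
  have hmul : (↑(n+1) : ℝ≥0∞) * μ (A (Fin.last n)) = 1 := by
    rw [← hsum]
    rw [Finset.sum_congr rfl (fun j _ => (hIA j).trans (hAeq j))]
    simp [Finset.sum_const, mul_comm]
  have hAlast : μ (A (Fin.last n)) = (↑(n+1) : ℝ≥0∞)⁻¹ :=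
    ENNReal.eq_inv_of_mul_eq_one_left (by rw [mul_comm]; exact hmul)
  have hset : {ω | rank ω = k} = f ⁻¹' (A (Fin.last n)) := by
    ext ω
    simp only [mem_setOf_eq, mem_preimage, hAdef, hrank ω]
    rw [card_castSucc (f ω)]
  rw [hset, ← Measure.map_apply hfm (hAm _), ← hμdef]
  exact hAlast
end

section
/- Let p, f be probability densities on ℝ^d with respect to Lebesgue measure, and let μ be the measure with density p. Define the misranking set M = {(y₁,y₂) : p(y₁) > p(y₂) and f(y₁) < f(y₂)} and μ⊗μ(M) = 0 (zero misranking mass). Assume additionally that p has no level-set atoms under μ (μ({p = t}) = 0 for all t) and similarly for f. Then for any ε, thresholds τ, τ* with μ({f ≥ τ}) = μ({p ≥ τ*}) = 1 - ε satisfy μ({f ≥ τ} Δ {p ≥ τ*}) = 0, i.e., the two regions agree μ-almost everywhere. -/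
open MeasureTheory Set
open scoped ENNReal symmDiff

/-- If `f` misranks pairs relative to `p` with `μ⊗μ`-probability zero, and
neither density has level-set atoms under `μ` (the measure with density `p`), then regions
of `f` and `p` at equal coverage `1 - ε` agree `μ`-almost everywhere. -/
theorem zero_misranking_implies_ae_equal_regions
    (d : ℕ) (p f : (Fin d → ℝ) → ℝ≥0∞) (hp : Measurable p) (hf : Measurable f)
    (hpdens : ∫⁻ y, p y = 1) (hfdens : ∫⁻ y, f y = 1)
    (μ : Measure (Fin d → ℝ)) (hμ : μ = volume.withDensity p)
    (M : Set ((Fin d → ℝ) × (Fin d → ℝ)))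
    (hM : M = {yy | p yy.2 < p yy.1 ∧ f yy.1 < f yy.2})
    (hmisrank : (μ.prod μ) M = 0)
    (hplevel : ∀ t : ℝ≥0∞, μ {y | p y = t} = 0)
    (hflevel : ∀ t : ℝ≥0∞, μ {y | f y = t} = 0)
    (ε : ℝ) (hε : ε ∈ Set.Ioo (0:ℝ) 1)
    (τ τs : ℝ≥0∞)
    (h1 : μ {y | τ ≤ f y} = ENNReal.ofReal (1 - ε))
    (h2 : μ {y | τs ≤ p y} = ENNReal.ofReal (1 - ε)) :
    μ ({y | τ ≤ f y} ∆ {y | τs ≤ p y}) = 0 := by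
  set A : Set (Fin d → ℝ) := {y | τ ≤ f y} with hA
  set B : Set (Fin d → ℝ) := {y | τs ≤ p y} with hB
  have hAm : MeasurableSet A := hf measurableSet_Ici
  have hBm : MeasurableSet B := hp measurableSet_Ici
  -- The rectangle (B \ A) ×ˢ (A \ B) is contained in M
  have hsub : (B \ A) ×ˢ (A \ B) ⊆ M := by
    rintro ⟨y₁, y₂⟩ ⟨⟨hy₁B, hy₁A⟩, hy₂A, hy₂B⟩
    simp only [hA, hB, mem_setOf_eq, not_le] at hy₁B hy₁A hy₂A hy₂B
    rw [hM]
    exact ⟨lt_of_lt_of_le hy₂B hy₁B, lt_of_lt_of_le hy₁A hy₂A⟩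
  haveI : SFinite μ := by rw [hμ]; infer_instance
  have hprod : μ (B \ A) * μ (A \ B) = 0 := by
    have := measure_mono_null hsub hmisrank
    rwa [Measure.prod_prod] at this
  -- μ (A \ B) = μ (B \ A)
  have hAfin : μ A ≠ ⊤ := by rw [h1]; exact ENNReal.ofReal_ne_top
  have hcfin : μ (A ∩ B) ≠ ⊤ := fun h => hAfin (top_le_iff.mp (h ▸ measure_mono inter_subset_left))
  have hdec1 : μ (A \ B) + μ (A ∩ B) = μ A := measure_diff_add_inter A hBm
  have hdec2 : μ (B \ A) + μ (B ∩ A) = μ B := measure_diff_add_inter B hAm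
  have heq : μ (A \ B) = μ (B \ A) := by
    have : μ (A \ B) + μ (A ∩ B) = μ (B \ A) + μ (A ∩ B) := by
      rw [hdec1, h1, ← h2, ← hdec2, inter_comm B A]
    exact WithTop.add_right_cancel hcfin this
  have hzero : μ (A \ B) = 0 := by
    rcases mul_eq_zero.mp hprod with h | h
    · rw [heq, h]
    · exact h
  rw [Set.symmDiff_def]
  exact measure_union_null hzero (heq ▸ hzero)
end

section
/- Let μ be a probability measure on ℝ^d with continuous density p such that the pushforward of μ under p is nonatomic. For ε ∈ (0,1) let τ* satisfy μ({p ≥ τ*}) = 1 - ε, and suppose the superlevel sets have finite Lebesgue measure. If (τ_n) is a sequence of thresholds with τ_n → τ* and Leb({|p - τ*| ≤ δ}) → 0 as δ → 0, then Leb({p ≥ τ_n}) → Leb({p ≥ τ*}). -/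
open MeasureTheory Set Filter
open scoped ENNReal

/-- Continuity of the prediction-region volume in the threshold: if the
thresholds `τ_n → τ*`, the superlevel sets have finite Lebesgue measure, and the density
does not concentrate Lebesgue mass near the level `τ*`, then
`Leb{p ≥ τ_n} → Leb{p ≥ τ*}`. -/
theorem volume_continuous_in_threshold
    (d : ℕ) (p : (Fin d → ℝ) → ℝ) (hcont : Continuous p) (hnn : ∀ y, 0 ≤ p y)
    (μ : Measure (Fin d → ℝ))
    (hμ : μ = volume.withDensity (fun y => ENNReal.ofReal (p y)))
    (hprob : IsProbabilityMeasure μ)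
    (hnonatomic : ∀ t : ℝ, μ {y | p y = t} = 0)
    (ε : ℝ) (hε : ε ∈ Set.Ioo (0:ℝ) 1)
    (τstar : ℝ) (hτstar : μ {y | τstar ≤ p y} = ENNReal.ofReal (1 - ε))
    (hfin : ∀ t : ℝ, 0 < t → volume {y | t ≤ p y} < ⊤)
    (τ : ℕ → ℝ) (hτ : Tendsto τ atTop (nhds τstar))
    (hband : Tendsto (fun δ : ℝ => volume {y | |p y - τstar| ≤ δ})
      (nhdsWithin 0 (Set.Ioi 0)) (nhds 0)) :
    Tendsto (fun n => volume {y | τ n ≤ p y}) atTop (nhds (volume {y | τstar ≤ p y})) := by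
  have hτpos : 0 < τstar := by
    by_contra h
    push_neg at h
    have huniv : {y : Fin d → ℝ | τstar ≤ p y} = univ := by
      ext y; simp [le_trans h (hnn y)]
    rw [huniv, measure_univ] at hτstar
    have hlt : ENNReal.ofReal (1 - ε) < 1 := by
      apply ENNReal.ofReal_lt_one.mpr; linarith [hε.1]
    rw [← hτstar] at hlt
    exact lt_irrefl _ hlt
  have hVfin : volume {y | τstar ≤ p y} ≠ ⊤ := (hfin τstar hτpos).ne
  rw [ENNReal.tendsto_nhds hVfin]
  intro η hη
  obtain ⟨δ, hδb, hδpos, hδlt⟩ :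
      ∃ δ : ℝ, volume {y | |p y - τstar| ≤ δ} < η ∧ 0 < δ ∧ δ < τstar / 2 := by
    have h1 : ∀ᶠ δ in nhdsWithin (0:ℝ) (Ioi 0),
        volume {y | |p y - τstar| ≤ δ} < η := hband (Iio_mem_nhds hη.bot_lt)
    have h2 : Ioo (0:ℝ) (τstar / 2) ∈ nhdsWithin (0:ℝ) (Ioi 0) :=
      Ioo_mem_nhdsGT_of_mem ⟨le_rfl, half_pos hτpos⟩
    obtain ⟨δ, hb, hmem⟩ := (h1.and (eventually_of_mem h2 (fun x hx => hx))).exists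
    exact ⟨δ, hb, hmem.1, hmem.2⟩
  have hev : ∀ᶠ n in atTop, τ n ∈ Icc (τstar - δ) (τstar + δ) :=
    hτ (Icc_mem_nhds (by linarith) (by linarith))
  filter_upwards [hev] with n hn
  have hsub1 : {y | τ n ≤ p y} ⊆ {y | τstar ≤ p y} ∪ {y | |p y - τstar| ≤ δ} := by
    intro y hy
    simp only [mem_setOf_eq] at hy
    by_cases hc : τstar ≤ p y
    · exact Or.inl hc
    · right
      push_neg at hc
      simp only [mem_setOf_eq, abs_le]
      constructor <;> linarith [hn.1, hn.2]
  have hsub2 : {y | τstar ≤ p y} ⊆ {y | τ n ≤ p y} ∪ {y | |p y - τstar| ≤ δ} := by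
    intro y hy
    simp only [mem_setOf_eq] at hy
    by_cases hc : τ n ≤ p y
    · exact Or.inl hc
    · right
      push_neg at hc
      simp only [mem_setOf_eq, abs_le]
      constructor <;> linarith [hn.1, hn.2]
  have h1 : volume {y | τ n ≤ p y} ≤ volume {y | τstar ≤ p y} + η := by
    calc volume {y | τ n ≤ p y}
        ≤ volume ({y | τstar ≤ p y} ∪ {y | |p y - τstar| ≤ δ}) := measure_mono hsub1
      _ ≤ volume {y | τstar ≤ p y} + volume {y | |p y - τstar| ≤ δ} := measure_union_le _ _
      _ ≤ volume {y | τstar ≤ p y} + η := add_le_add_right hδb.le _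
  have h2 : volume {y | τstar ≤ p y} ≤ volume {y | τ n ≤ p y} + η := by
    calc volume {y | τstar ≤ p y}
        ≤ volume ({y | τ n ≤ p y} ∪ {y | |p y - τstar| ≤ δ}) := measure_mono hsub2
      _ ≤ volume {y | τ n ≤ p y} + volume {y | |p y - τstar| ≤ δ} := measure_union_le _ _
      _ ≤ volume {y | τ n ≤ p y} + η := add_le_add_right hδb.le _
  exact ⟨tsub_le_iff_right.mpr h2, h1⟩
end
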